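/- Every semi-monotone operator α(v) = β(v,v) is generalized pseudo-monotone in the sense of Browder–Hess: if (u_n, u_n*) ∈ graph(α), u_n ⇀ u, u_n* ⇀ u*, and limsup ⟨u_n*, u_n⟩ ≤ ⟨u*, u⟩, then u* ∈ α(u) and ⟨u_n*, u_n⟩ → ⟨u*, u⟩. -/

import Mathlib

open Filter Topology

/-- Weak convergence of a sequence in `V`. -/
def WeakConvSeq {V : Type*} [NormedAddCommGroup V] [NormedSpace ℝ V]
    (v : ℕ → V) (v0 : V) : Prop :=
  ∀ φ : StrongDual ℝ V, Tendsto (fun n => φ (v n)) atTop (𝓝 (φ v0))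

/-- Weak convergence of a sequence in `V'`. -/
def WeakStarConvSeq {V : Type*} [NormedAddCommGroup V] [NormedSpace ℝ V]
    (f : ℕ → StrongDual ℝ V) (f0 : StrongDual ℝ V) : Prop :=
  ∀ w : V, Tendsto (fun n => f n w) atTop (𝓝 (f0 w))

/-- A multivalued operator `α : V → 𝒫(V')` is monotone. -/
def MonotoneOp {V : Type*} [NormedAddCommGroup V] [NormedSpace ℝ V]
    (α : V → Set (StrongDual ℝ V)) : Prop :=
  ∀ v w v' w', v' ∈ α v → w' ∈ α w → 0 ≤ (v' - w') (v - w)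

/-- `α` is maximal monotone. -/
def MaximalMonotoneOp {V : Type*} [NormedAddCommGroup V] [NormedSpace ℝ V]
    (α : V → Set (StrongDual ℝ V)) : Prop :=
  MonotoneOp α ∧
    ∀ β : V → Set (StrongDual ℝ V), MonotoneOp β → (∀ v, α v ⊆ β v) → ∀ v, β v = α v

/-!
Let `a n = ⟨u_n*, u_n⟩`. For `w' ∈ β(u, w)`, compactness of `V ⊂ H` gives `u_n → u` in `H`, so
lower semicontinuity yields `w_n' ∈ β(u_n, w)` with `w_n' → w'` strongly. Monotonicity of
`β(u_n, ·)` at `(u_n, u_n*)` and `(w, w_n')` gives `a n ≥ ⟨u_n*, w⟩ + ⟨w_n', u_n - w⟩`, and the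
right side converges (a strong–weak pairing), so `⟨u*, u⟩ - liminf a ≤ ⟨u* - w', u - w⟩`.
Since `liminf a ≤ limsup a ≤ ⟨u*, u⟩`, the pair `(u, u*)` is monotonically related to the graph
of `β(u, ·)`, and maximality gives `u* ∈ β(u, u)`. Taking `(w, w') = (u, u*)` then gives
`⟨u*, u⟩ ≤ liminf a`, hence convergence.
-/

section

variable {V : Type*} [NormedAddCommGroup V] [NormedSpace ℝ V]

theorem WeakStarConvSeq.exists_norm_le [CompleteSpace V] {f : ℕ → StrongDual ℝ V}
    {f0 : StrongDual ℝ V} (hf : WeakStarConvSeq f f0) : ∃ C, ∀ n, ‖f n‖ ≤ C :=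
  banach_steinhaus fun x =>
    let ⟨C, hC⟩ := (hf x).norm.bddAbove_range
    ⟨C, Set.forall_mem_range.1 hC⟩

theorem WeakConvSeq.exists_norm_le {v : ℕ → V} {v0 : V} (hv : WeakConvSeq v v0) :
    ∃ C, ∀ n, ‖v n‖ ≤ C := by
  have hdual : WeakStarConvSeq (fun n => NormedSpace.inclusionInDoubleDual ℝ V (v n))
      (NormedSpace.inclusionInDoubleDual ℝ V v0) := hv
  obtain ⟨C, hC⟩ := hdual.exists_norm_le
  exact ⟨C, fun n => (NormedSpace.inclusionInDoubleDualLi ℝ).norm_map (v n) ▸ hC n⟩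

theorem WeakConvSeq.tendsto_apply_of_tendsto {v : ℕ → V} {v0 : V} (hv : WeakConvSeq v v0)
    {f : ℕ → StrongDual ℝ V} {f0 : StrongDual ℝ V} (hf : Tendsto f atTop (𝓝 f0)) :
    Tendsto (fun n => f n (v n)) atTop (𝓝 (f0 v0)) := by
  obtain ⟨C, hC⟩ := hv.exists_norm_le
  have hdiff : Tendsto (fun n => (f n - f0) (v n)) atTop (𝓝 0) := by
    refine squeeze_zero_norm (fun n => ?_)
      (by simpa using (tendsto_iff_norm_sub_tendsto_zero.1 hf).mul_const C)
    calc ‖(f n - f0) (v n)‖ ≤ ‖f n - f0‖ * ‖v n‖ := (f n - f0).le_opNorm _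
      _ ≤ ‖f n - f0‖ * C := by gcongr; exact hC n
  simpa using hdiff.add (hv f0)

theorem WeakConvSeq.sub_const {v : ℕ → V} {v0 : V} (hv : WeakConvSeq v v0) (w : V) :
    WeakConvSeq (fun n => v n - w) (v0 - w) :=
  fun φ => by simpa using (hv φ).sub_const (φ w)

theorem WeakStarConvSeq.isBoundedUnder_abs_apply [CompleteSpace V] {f : ℕ → StrongDual ℝ V}
    {f0 : StrongDual ℝ V} (hf : WeakStarConvSeq f f0) {v : ℕ → V} {v0 : V}
    (hv : WeakConvSeq v v0) : IsBoundedUnder (· ≤ ·) atTop fun n => |f n (v n)| := by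
  obtain ⟨C, hC⟩ := hf.exists_norm_le
  obtain ⟨D, hD⟩ := hv.exists_norm_le
  refine isBoundedUnder_of ⟨C * D, fun n => ?_⟩
  calc |f n (v n)| ≤ ‖f n‖ * ‖v n‖ := (f n).le_opNorm _
    _ ≤ C * D := mul_le_mul (hC n) (hD n) (norm_nonneg _) ((norm_nonneg _).trans (hC 0))

theorem MaximalMonotoneOp.mem_of_forall_nonneg {α : V → Set (StrongDual ℝ V)}
    (hα : MaximalMonotoneOp α) {u : V} {u' : StrongDual ℝ V}
    (h : ∀ w w', w' ∈ α w → 0 ≤ (u' - w') (u - w)) : u' ∈ α u := by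
  let γ : V → Set (StrongDual ℝ V) := fun v => α v ∪ {x | v = u ∧ x = u'}
  have hγ : MonotoneOp γ := by
    rintro v w v' w' (hv | ⟨rfl, rfl⟩) (hw | ⟨rfl, rfl⟩)
    · exact hα.1 v w v' w' hv hw
    · have := h v v' hv
      simp only [sub_apply, map_sub] at this ⊢
      linarith
    · exact h w w' hw
    · simp
  rw [← hα.2 γ hγ (fun _ => Set.subset_union_left) u]
  exact Or.inr ⟨rfl, rfl⟩

theorem sub_liminf_le_apply_sub {H : Type*} [TopologicalSpace H]
    {β : H → V → Set (StrongDual ℝ V)} (hmono : ∀ z, MonotoneOp (β z)) {z : ℕ → H} {z0 : H}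
    (hlsc : ∀ w w', w' ∈ β z0 w →
      ∃ wn : ℕ → StrongDual ℝ V, (∀ n, wn n ∈ β (z n) w) ∧ Tendsto wn atTop (𝓝 w'))
    {u : ℕ → V} {u0 : V} {us : ℕ → StrongDual ℝ V} {us0 : StrongDual ℝ V}
    (hgraph : ∀ n, us n ∈ β (z n) (u n)) (hu : WeakConvSeq u u0) (hus : WeakStarConvSeq us us0)
    (hbdd : IsBoundedUnder (· ≤ ·) atTop fun n => us n (u n))
    {w : V} {w' : StrongDual ℝ V} (hw' : w' ∈ β z0 w) :
    us0 u0 - liminf (fun n => us n (u n)) atTop ≤ (us0 - w') (u0 - w) := by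
  obtain ⟨wn, hwn, hwn_lim⟩ := hlsc w w' hw'
  have hlower : ∀ n, us n w + wn n (u n - w) ≤ us n (u n) := fun n => by
    have := hmono (z n) (u n) w (us n) (wn n) (hgraph n) (hwn n)
    simp only [sub_apply, map_sub] at this ⊢
    linarith
  have hlim : Tendsto (fun n => us n w + wn n (u n - w)) atTop (𝓝 (us0 w + w' (u0 - w))) :=
    (hus w).add ((hu.sub_const w).tendsto_apply_of_tendsto hwn_lim)
  have hle : us0 w + w' (u0 - w) ≤ liminf (fun n => us n (u n)) atTop :=
    hlim.liminf_eq ▸ liminf_le_liminf (.of_forall hlower) hlim.isBoundedUnder_ge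
      hbdd.isCoboundedUnder_ge
  simp only [sub_apply, map_sub] at hle ⊢
  linarith

end

theorem semimonotone_generalized_pseudomonotone_general
    (V : Type*) [NormedAddCommGroup V] [NormedSpace ℝ V] [CompleteSpace V]
    (H : Type*) [NormedAddCommGroup H] [InnerProductSpace ℝ H]
    (e : V →L[ℝ] H)
    (hcompact : ∀ (vn : ℕ → V) (v0 : V), WeakConvSeq vn v0 →
      Tendsto (fun n => e (vn n)) atTop (𝓝 (e v0)))
    (β : H → V → Set (StrongDual ℝ V))
    (hmax : ∀ z : H, MaximalMonotoneOp (β z))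
    (hlsc : ∀ (z : H) (u : V) (u' : StrongDual ℝ V), u' ∈ β z u →
      ∀ zn : ℕ → H, Tendsto zn atTop (𝓝 z) →
        ∃ un : ℕ → StrongDual ℝ V,
          (∀ n, un n ∈ β (zn n) u) ∧ Tendsto un atTop (𝓝 u')) :
    ∀ (un : ℕ → V) (uns : ℕ → StrongDual ℝ V) (u : V)
      (us : StrongDual ℝ V),
      (∀ n, uns n ∈ β (e (un n)) (un n)) →
      WeakConvSeq un u → WeakStarConvSeq uns us →
      limsup (fun n => uns n (un n)) atTop ≤ us u →
      us ∈ β (e u) u ∧ Tendsto (fun n => uns n (un n)) atTop (𝓝 (us u)) := by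
  intro un uns u us hgraph hun huns hlimsup
  obtain ⟨hbdd_above, hbdd_below⟩ := isBoundedUnder_le_abs.1 (huns.isBoundedUnder_abs_apply hun)
  have hdefect {w w'} (hw' : w' ∈ β (e u) w) :=
    sub_liminf_le_apply_sub (fun z => (hmax z).1)
      (fun w w' hw' => hlsc (e u) w w' hw' _ (hcompact un u hun)) hgraph hun huns hbdd_above hw'
  have hliminf : liminf (fun n => uns n (un n)) atTop ≤ us u :=
    (liminf_le_limsup hbdd_above hbdd_below).trans hlimsup
  have hmem : us ∈ β (e u) u :=
    (hmax (e u)).mem_of_forall_nonneg fun w w' hw' => by linarith [hdefect hw']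
  refine ⟨hmem, tendsto_of_le_liminf_of_limsup_le ?_ hlimsup hbdd_above hbdd_below⟩
  simpa using hdefect hmem

/-- every semi-monotone operator `α(v) = β(v,v)` is generalized
pseudo-monotone in the sense of Browder–Hess. -/
theorem semimonotone_generalized_pseudomonotone
    (V : Type*) [NormedAddCommGroup V] [NormedSpace ℝ V] [CompleteSpace V]
    (hrefl : Function.Surjective (NormedSpace.inclusionInDoubleDual ℝ V))
    (H : Type*) [NormedAddCommGroup H] [InnerProductSpace ℝ H] [CompleteSpace H]
    (e : V →L[ℝ] H) (he : Function.Injective e) (hdense : DenseRange e)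
    (hcompact : ∀ (vn : ℕ → V) (v0 : V), WeakConvSeq vn v0 →
      Tendsto (fun n => e (vn n)) atTop (𝓝 (e v0)))
    (β : H → V → Set (StrongDual ℝ V))
    (hmax : ∀ z : H, MaximalMonotoneOp (β z))
    (hlsc : ∀ (z : H) (u : V) (u' : StrongDual ℝ V), u' ∈ β z u →
      ∀ zn : ℕ → H, Tendsto zn atTop (𝓝 z) →
        ∃ un : ℕ → StrongDual ℝ V,
          (∀ n, un n ∈ β (zn n) u) ∧ Tendsto un atTop (𝓝 u')) :
    ∀ (un : ℕ → V) (uns : ℕ → StrongDual ℝ V) (u : V)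
      (us : StrongDual ℝ V),
      (∀ n, uns n ∈ β (e (un n)) (un n)) →
      WeakConvSeq un u → WeakStarConvSeq uns us →
      limsup (fun n => uns n (un n)) atTop ≤ us u →
      us ∈ β (e u) u ∧ Tendsto (fun n => uns n (un n)) atTop (𝓝 (us u)) :=
  semimonotone_generalized_pseudomonotone_general V H e hcompact β hmax hlsc
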